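/- The Laurent polynomials W k (for k ≥ 1) and W' l (for l ≥ 0) are pairwise distinct: W k ≠ W l for k ≠ l with k, l ≥ 1; W' k ≠ W' l for k ≠ l with k, l ≥ 0; W k ≠ W' l for all k ≥ 1 and l ≥ 0; moreover W k ≠ U² for every k ≥ 1 and W' l ≠ U² for every l ≥ 0, where U := -z - z⁻¹. (Hence the links W_n(B₃), n ≥ 1, are pairwise non-isotopic and none is isotopic to the 3-component unlink.) -/

import Mathlib

/-! `Phi` multiplies by `z⁻⁴` and adds the fixed polynomial `(z⁻³ - z⁻¹) Q₃`, whose lowest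
exponent is `-12`; so once the lowest exponent of `p` is below `-8`, each application of `Phi`
lowers it by exactly `4`. Starting from `U²` (lowest exponent `-2`) and from `W' 0` (lowest
exponent `-10`), this gives lowest exponents `-8 - 4k` for `W k`, `k ≥ 1`, and `-10 - 4l` for
`W' l`: pairwise distinct (the two families differ mod 4) and different from `-2`. -/

open LaurentPolynomial

noncomputable def U : LaurentPolynomial ℤ := -T 1 - T (-1)

noncomputable def Q3 : LaurentPolynomial ℤ :=
  T 9 - 2 * T 7 + T 5 - 2 * T 3 - 2 * T 1 - 2 * T (-1) - 2 * T (-3) + T (-5)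
    - 2 * T (-7) + T (-9)

/-- The maximum exponent in the support of a Laurent polynomial. -/
noncomputable def maxdeg (p : LaurentPolynomial ℤ) : WithBot ℤ := p.coeff.support.max

/-- The minimum exponent in the support of a Laurent polynomial. -/
noncomputable def mindeg (p : LaurentPolynomial ℤ) : WithTop ℤ := p.coeff.support.min

/-- The skein operator encoding the relation between Jones polynomials of
successive Whitehead doubles of `B₃`. -/
noncomputable def Phi (p : LaurentPolynomial ℤ) : LaurentPolynomial ℤ :=
  T (-4) * p + (T (-3) - T (-1)) * Q3

lemma coeff_T_self {R : Type*} [Semiring R] (n : ℤ) : (T n : R[T;T⁻¹]).coeff n = 1 := by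
  simp

lemma coeff_T_of_lt {R : Type*} [Semiring R] {m n : ℤ} (h : m < n) :
    (T n : R[T;T⁻¹]).coeff m = 0 := by
  simp [h.ne']

lemma mindeg_eq_iff {p : LaurentPolynomial ℤ} {n : ℤ} :
    mindeg p = n ↔ p.coeff n ≠ 0 ∧ ∀ m < n, p.coeff m = 0 := by
  refine ⟨fun h ↦ ⟨Finsupp.mem_support_iff.mp (Finset.mem_of_min h), fun m hm ↦
    Finsupp.notMem_support_iff.mp (Finset.notMem_of_lt_min hm h)⟩, fun ⟨hn, hlow⟩ ↦ ?_⟩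
  refine le_antisymm (Finset.min_le (Finsupp.mem_support_iff.mpr hn)) (Finset.le_min fun m hm ↦ ?_)
  by_contra! hlt
  exact Finsupp.mem_support_iff.mp hm (hlow m (WithTop.coe_lt_coe.mp hlt))

lemma coeff_eq_zero_of_lt_mindeg {p : LaurentPolynomial ℤ} {m : ℤ} (h : m < mindeg p) :
    p.coeff m = 0 :=
  Finsupp.notMem_support_iff.mp (Finset.notMem_of_coe_lt_min h)

lemma mindeg_add_of_lt {p q : LaurentPolynomial ℤ} {n : ℤ} (hp : mindeg p = n)
    (hq : n < mindeg q) : mindeg (p + q) = n := by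
  have hq' : ∀ m ≤ n, q.coeff m = 0 := fun m hm ↦
    coeff_eq_zero_of_lt_mindeg ((WithTop.coe_le_coe.mpr hm).trans_lt hq)
  rw [mindeg_eq_iff] at hp ⊢
  simp only [AddMonoidAlgebra.coeff_add, Finsupp.add_apply, hq' _ le_rfl, add_zero]
  exact ⟨hp.1, fun m hm ↦ by rw [hp.2 m hm, hq' m hm.le, add_zero]⟩

lemma mindeg_neg (p : LaurentPolynomial ℤ) : mindeg (-p) = mindeg p := by
  simp [mindeg]

lemma mindeg_T_mul {p : LaurentPolynomial ℤ} {n : ℤ} (hp : mindeg p = n) (k : ℤ) :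
    mindeg (T k * p) = (n + k : ℤ) := by
  have hcoeff (m : ℤ) : (T k * p).coeff m = p.coeff (m - k) := by
    rw [T, AddMonoidAlgebra.coeff_single_mul_apply, one_mul, neg_add_eq_sub]
  rw [mindeg_eq_iff] at hp ⊢
  simp only [hcoeff, add_sub_cancel_right]
  exact ⟨hp.1, fun m hm ↦ hp.2 _ (by omega)⟩

lemma mindeg_Q3 : mindeg Q3 = (-9 : ℤ) := by
  refine mindeg_eq_iff.mpr ⟨?_, fun m hm ↦ ?_⟩ <;>
    simp (disch := omega) [Q3, two_mul, AddMonoidAlgebra.coeff_sub, AddMonoidAlgebra.coeff_add,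
      coeff_T_of_lt, coeff_T_self, -T_apply]

lemma U_sq : U ^ 2 = T 2 + 2 * T 0 + T (-2) := by
  have h : U ^ 2 = T 1 * T 1 + 2 * (T 1 * T (-1)) + T (-1) * T (-1) := by rw [U]; ring
  rw [h, ← T_add, ← T_add, ← T_add]
  norm_num

lemma mindeg_U_sq : mindeg (U ^ 2) = (-2 : ℤ) := by
  rw [U_sq]
  refine mindeg_eq_iff.mpr ⟨?_, fun m hm ↦ ?_⟩ <;>
    simp (disch := omega) [two_mul, AddMonoidAlgebra.coeff_add, coeff_T_of_lt, coeff_T_self,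
      -T_apply, -T_zero]

lemma mindeg_T_sub_T_mul_Q3 : mindeg ((T (-3) - T (-1)) * Q3) = (-12 : ℤ) := by
  rw [sub_mul, sub_eq_add_neg]
  refine mindeg_add_of_lt (by simpa using mindeg_T_mul mindeg_Q3 (-3)) ?_
  rw [mindeg_neg, mindeg_T_mul mindeg_Q3, WithTop.coe_lt_coe]
  norm_num

lemma mindeg_Phi_of_lt {p : LaurentPolynomial ℤ} {n : ℤ} (hp : mindeg p = n) (hn : n < -8) :
    mindeg (Phi p) = (n - 4 : ℤ) := by
  refine mindeg_add_of_lt (by simpa [← sub_eq_add_neg] using mindeg_T_mul hp (-4)) ?_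
  rw [mindeg_T_sub_T_mul_Q3, WithTop.coe_lt_coe]
  omega

lemma mindeg_Phi_of_gt {p : LaurentPolynomial ℤ} {n : ℤ} (hp : mindeg p = n) (hn : -8 < n) :
    mindeg (Phi p) = (-12 : ℤ) := by
  rw [Phi, add_comm]
  refine mindeg_add_of_lt mindeg_T_sub_T_mul_Q3 ?_
  rw [mindeg_T_mul hp, WithTop.coe_lt_coe]
  omega

lemma mindeg_of_forall_succ_eq_Phi {f : ℕ → LaurentPolynomial ℤ}
    (hf : ∀ k, f (k + 1) = Phi (f k)) {n : ℤ} (h0 : mindeg (f 0) = n) (hn : n < -8) (k : ℕ) :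
    mindeg (f k) = (n - 4 * k : ℤ) := by
  induction k with
  | zero => simpa using h0
  | succ k ih =>
    rw [hf, mindeg_Phi_of_lt ih (by omega)]
    congr 1
    omega

lemma mindeg_W'_zero : mindeg (-T 8 + 2 * T 6 - T 4 + 2 * T 2 + 1 + T (-4) - T (-6)
      + 2 * T (-8) - T (-10) : LaurentPolynomial ℤ) = (-10 : ℤ) := by
  rw [← T_zero]
  refine mindeg_eq_iff.mpr ⟨?_, fun m hm ↦ ?_⟩ <;>
    simp (disch := omega) [two_mul, AddMonoidAlgebra.coeff_sub, AddMonoidAlgebra.coeff_add,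
      AddMonoidAlgebra.coeff_neg, coeff_T_of_lt, coeff_T_self, -T_apply, -T_zero]

/-- The Jones polynomials of the links `W_n(B₃)`, `n ≥ 1`, are pairwise distinct
and distinct from that of the 3-component unlink. -/
theorem jones_W_pairwise_distinct
    (W : ℕ → LaurentPolynomial ℤ) (hW0 : W 0 = U ^ 2)
    (hWrec : ∀ k : ℕ, W (k + 1) = Phi (W k))
    (W' : ℕ → LaurentPolynomial ℤ)
    (hW'0 : W' 0 = -T 8 + 2 * T 6 - T 4 + 2 * T 2 + 1 + T (-4) - T (-6)
      + 2 * T (-8) - T (-10))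
    (hW'rec : ∀ k : ℕ, W' (k + 1) = Phi (W' k)) :
    (∀ k l : ℕ, 1 ≤ k → 1 ≤ l → k ≠ l → W k ≠ W l) ∧
    (∀ k l : ℕ, k ≠ l → W' k ≠ W' l) ∧
    (∀ k l : ℕ, 1 ≤ k → W k ≠ W' l) ∧
    (∀ k : ℕ, 1 ≤ k → W k ≠ U ^ 2) ∧
    (∀ l : ℕ, W' l ≠ U ^ 2) := by
  have hW : ∀ k, 1 ≤ k → mindeg (W k) = (-8 - 4 * k : ℤ) := by
    intro k hk
    obtain ⟨j, rfl⟩ := Nat.exists_eq_add_of_le' hk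
    have hW1 : mindeg (W 1) = (-12 : ℤ) := by
      rw [hWrec, hW0]
      exact mindeg_Phi_of_gt mindeg_U_sq (by norm_num)
    rw [mindeg_of_forall_succ_eq_Phi (f := fun k ↦ W (k + 1)) (fun k ↦ hWrec (k + 1)) hW1
      (by norm_num) j]
    congr 1
    omega
  have hW' (l : ℕ) : mindeg (W' l) = (-10 - 4 * l : ℤ) :=
    mindeg_of_forall_succ_eq_Phi hW'rec (hW'0 ▸ mindeg_W'_zero) (by norm_num) l
  refine ⟨fun k l hk hl hkl h ↦ ?_, fun k l hkl h ↦ ?_, fun k l hk h ↦ ?_, fun k hk h ↦ ?_,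
    fun l h ↦ ?_⟩ <;> have h := congrArg mindeg h
  · rw [hW k hk, hW l hl, WithTop.coe_inj] at h; omega
  · rw [hW' k, hW' l, WithTop.coe_inj] at h; omega
  · rw [hW k hk, hW' l, WithTop.coe_inj] at h; omega
  · rw [hW k hk, mindeg_U_sq, WithTop.coe_inj] at h; omega
  · rw [hW' l, mindeg_U_sq, WithTop.coe_inj] at h; omega
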